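/- Suppose F_n → F in C², G_n → G uniformly (all smooth with compact support contained in a fixed compact set), and {F_n,G_n} → H uniformly, where H is continuous. Then {F,G} = H as functions on ℝ². -/

import Mathlib

open Real Filter MeasureTheory

/-- Partial derivative in the first variable `q`. -/
noncomputable def pq (F : ℝ × ℝ → ℝ) (x : ℝ × ℝ) : ℝ :=
  deriv (fun t => F (t, x.2)) x.1

/-- Partial derivative in the second variable `p`. -/
noncomputable def pp (F : ℝ × ℝ → ℝ) (x : ℝ × ℝ) : ℝ :=
  deriv (fun t => F (x.1, t)) x.2

/-- Poisson bracket on `ℝ²`. -/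
noncomputable def PB (F G : ℝ × ℝ → ℝ) (x : ℝ × ℝ) : ℝ :=
  pq F x * pp G x - pp F x * pq G x

section helpers

variable {u v : ℝ × ℝ → ℝ}

lemma hasDerivAt_sliceq (hu : ContDiff ℝ (⊤ : ℕ∞) u) (x : ℝ × ℝ) :
    HasDerivAt (fun t => u (t, x.2)) (pq u x) x.1 := by
  have h : DifferentiableAt ℝ (fun t => u (t, x.2)) x.1 := by
    have := (hu.differentiable (by simp)).differentiableAt (x := x)
    have h2 : DifferentiableAt ℝ (fun t : ℝ => (t, x.2)) x.1 :=
      differentiableAt_id.prodMk (differentiableAt_const _)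
    exact this.comp x.1 h2
  exact h.hasDerivAt

lemma hasDerivAt_slicep (hu : ContDiff ℝ (⊤ : ℕ∞) u) (x : ℝ × ℝ) :
    HasDerivAt (fun t => u (x.1, t)) (pp u x) x.2 := by
  have h : DifferentiableAt ℝ (fun t => u (x.1, t)) x.2 := by
    have := (hu.differentiable (by simp)).differentiableAt (x := x)
    have h2 : DifferentiableAt ℝ (fun t : ℝ => (x.1, t)) x.2 :=
      (differentiableAt_const _).prodMk differentiableAt_id
    exact this.comp x.2 h2
  exact h.hasDerivAt

lemma pq_eq_fderiv (hu : ContDiff ℝ (⊤ : ℕ∞) u) (x : ℝ × ℝ) :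
    pq u x = fderiv ℝ u x (1, 0) := by
  have h1 : HasDerivAt (fun t : ℝ => (t, x.2)) ((1:ℝ), (0:ℝ)) x.1 :=
    (hasDerivAt_id x.1).prodMk (hasDerivAt_const x.1 x.2)
  have h2 : HasFDerivAt u (fderiv ℝ u x) x :=
    ((hu.differentiable (by simp)) x).hasFDerivAt
  have h3 : HasDerivAt (fun t => u (t, x.2)) (fderiv ℝ u x (1, 0)) x.1 := by
    have := h2.comp_hasDerivAt x.1 (by simpa using h1)
    exact this
  exact (hasDerivAt_sliceq hu x).unique h3

lemma pp_eq_fderiv (hu : ContDiff ℝ (⊤ : ℕ∞) u) (x : ℝ × ℝ) :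
    pp u x = fderiv ℝ u x (0, 1) := by
  have h1 : HasDerivAt (fun t : ℝ => (x.1, t)) ((0:ℝ), (1:ℝ)) x.2 :=
    (hasDerivAt_const x.2 x.1).prodMk (hasDerivAt_id x.2)
  have h2 : HasFDerivAt u (fderiv ℝ u x) x :=
    ((hu.differentiable (by simp)) x).hasFDerivAt
  have h3 : HasDerivAt (fun t => u (x.1, t)) (fderiv ℝ u x (0, 1)) x.2 := by
    have := h2.comp_hasDerivAt x.2 (by simpa using h1)
    exact this
  exact (hasDerivAt_slicep hu x).unique h3

lemma contDiff_pq (hu : ContDiff ℝ (⊤ : ℕ∞) u) : ContDiff ℝ (⊤ : ℕ∞) (pq u) := by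
  have : pq u = fun x => fderiv ℝ u x (1, 0) := funext (pq_eq_fderiv hu)
  rw [this]
  exact (hu.fderiv_right (by simp)).clm_apply contDiff_const

lemma contDiff_pp (hu : ContDiff ℝ (⊤ : ℕ∞) u) : ContDiff ℝ (⊤ : ℕ∞) (pp u) := by
  have : pp u = fun x => fderiv ℝ u x (0, 1) := funext (pp_eq_fderiv hu)
  rw [this]
  exact (hu.fderiv_right (by simp)).clm_apply contDiff_const

lemma support_pq_subset (u : ℝ × ℝ → ℝ) : Function.support (pq u) ⊆ tsupport u := by
  intro x hx
  by_contra hxn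
  apply hx
  have hopen : (tsupport u)ᶜ ∈ nhds x :=
    (isClosed_tsupport u).isOpen_compl.mem_nhds hxn
  have hev : u =ᶠ[nhds x] (fun _ => (0:ℝ)) := by
    filter_upwards [hopen] with y hy
    exact image_eq_zero_of_notMem_tsupport hy
  have htend : Filter.Tendsto (fun t : ℝ => (t, x.2)) (nhds x.1) (nhds x) := by
    have : Filter.Tendsto (fun t : ℝ => (t, x.2)) (nhds x.1) (nhds (x.1, x.2)) :=
      (continuous_id.prodMk continuous_const).tendsto x.1
    simpa using this
  have hev2 : (fun t => u (t, x.2)) =ᶠ[nhds x.1] (fun _ => (0:ℝ)) :=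
    hev.comp_tendsto htend
  have : pq u x = deriv (fun _ : ℝ => (0:ℝ)) x.1 := hev2.deriv_eq
  simpa [pq] using this

lemma support_pp_subset (u : ℝ × ℝ → ℝ) : Function.support (pp u) ⊆ tsupport u := by
  intro x hx
  by_contra hxn
  apply hx
  have hopen : (tsupport u)ᶜ ∈ nhds x :=
    (isClosed_tsupport u).isOpen_compl.mem_nhds hxn
  have hev : u =ᶠ[nhds x] (fun _ => (0:ℝ)) := by
    filter_upwards [hopen] with y hy
    exact image_eq_zero_of_notMem_tsupport hy
  have htend : Filter.Tendsto (fun t : ℝ => (x.1, t)) (nhds x.2) (nhds x) := by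
    have : Filter.Tendsto (fun t : ℝ => (x.1, t)) (nhds x.2) (nhds (x.1, x.2)) :=
      (continuous_const.prodMk continuous_id).tendsto x.2
    simpa using this
  have hev2 : (fun t => u (x.1, t)) =ᶠ[nhds x.2] (fun _ => (0:ℝ)) :=
    hev.comp_tendsto htend
  have : pp u x = deriv (fun _ : ℝ => (0:ℝ)) x.2 := hev2.deriv_eq
  simpa [pp] using this

lemma tsupport_pq_subset (u : ℝ × ℝ → ℝ) : tsupport (pq u) ⊆ tsupport u :=
  closure_minimal (support_pq_subset u) (isClosed_tsupport u)

lemma tsupport_pp_subset (u : ℝ × ℝ → ℝ) : tsupport (pp u) ⊆ tsupport u :=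
  closure_minimal (support_pp_subset u) (isClosed_tsupport u)

lemma exists_bound {K : Set (ℝ × ℝ)} (hK : IsCompact K) (hu : Continuous u)
    (hsupp : tsupport u ⊆ K) : ∃ C : ℝ, 0 ≤ C ∧ ∀ x, |u x| ≤ C := by
  have hcs : HasCompactSupport u :=
    hK.of_isClosed_subset (isClosed_tsupport u) hsupp
  obtain ⟨C, hC⟩ := hcs.exists_bound_of_continuous hu
  exact ⟨C, le_trans (abs_nonneg _) (by simpa using hC (0,0)), by simpa using hC⟩

lemma pq_mul (hu : ContDiff ℝ (⊤ : ℕ∞) u) (hv : ContDiff ℝ (⊤ : ℕ∞) v) (x : ℝ × ℝ) :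
    pq (fun y => u y * v y) x = pq u x * v x + u x * pq v x := by
  have h := (hasDerivAt_sliceq hu x).mul (hasDerivAt_sliceq hv x)
  have h2 : pq (fun y => u y * v y) x = pq u x * v (x.1, x.2) + u (x.1, x.2) * pq v x := h.deriv
  simpa using h2

lemma pp_mul (hu : ContDiff ℝ (⊤ : ℕ∞) u) (hv : ContDiff ℝ (⊤ : ℕ∞) v) (x : ℝ × ℝ) :
    pp (fun y => u y * v y) x = pp u x * v x + u x * pp v x := by
  have h := (hasDerivAt_slicep hu x).mul (hasDerivAt_slicep hv x)
  have h2 : pp (fun y => u y * v y) x = pp u x * v (x.1, x.2) + u (x.1, x.2) * pp v x := h.deriv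
  simpa using h2

/-- FTC along the second variable. -/
lemma integral_pp (hu : ContDiff ℝ (⊤ : ℕ∞) u) (hcont : Continuous (pp u)) (q p : ℝ) :
    ∫ t in (0:ℝ)..p, pp u (q, t) = u (q, p) - u (q, 0) := by
  apply intervalIntegral.integral_eq_sub_of_hasDerivAt
  · intro t _
    exact hasDerivAt_slicep hu (q, t)
  · exact (hcont.comp (continuous_const.prodMk continuous_id)).intervalIntegrable 0 p

/-- Differentiation under the interval integral in the first variable. -/
lemma hasDerivAt_integral_param
    (hu : Continuous u) (hpq : Continuous (pq u))
    (hder : ∀ x : ℝ × ℝ, HasDerivAt (fun s => u (s, x.2)) (pq u x) x.1)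
    {C : ℝ} (hC : ∀ x, |pq u x| ≤ C) (p q : ℝ) :
    HasDerivAt (fun s => ∫ t in (0:ℝ)..p, u (s, t)) (∫ t in (0:ℝ)..p, pq u (q, t)) q := by
  have h := intervalIntegral.hasDerivAt_integral_of_dominated_loc_of_deriv_le
    (F := fun s t => u (s, t)) (F' := fun s t => pq u (s, t)) (x₀ := q)
    (a := 0) (b := p) (μ := MeasureTheory.volume) (bound := fun _ => C)
    (s := Metric.ball q 1) (Metric.ball_mem_nhds q one_pos)
    (by
      filter_upwards with s
      exact (hu.comp (continuous_const.prodMk continuous_id)).aestronglyMeasurable)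
    ((hu.comp (continuous_const.prodMk continuous_id)).intervalIntegrable 0 p)
    (hpq.comp (continuous_const.prodMk continuous_id)).aestronglyMeasurable
    (by
      filter_upwards with t _ s _
      simpa using hC (s, t))
    (intervalIntegrable_const)
    (by
      filter_upwards with t _ s _
      exact hder (s, t))
  exact h.2

/-- A continuous function whose interval integrals all vanish is zero. -/
lemma zero_of_integral (w : ℝ → ℝ) (hw : Continuous w)
    (hz : ∀ p : ℝ, (∫ t in (0:ℝ)..p, w t) = 0) (p : ℝ) : w p = 0 := by
  have h1 : HasDerivAt (fun s => ∫ t in (0:ℝ)..s, w t) (w p) p :=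
    intervalIntegral.integral_hasDerivAt_right (hw.intervalIntegrable 0 p)
      (hw.stronglyMeasurableAtFilter _ _) hw.continuousAt
  have h2 : (fun s => ∫ t in (0:ℝ)..s, w t) = fun _ => (0:ℝ) := funext hz
  rw [h2] at h1
  simpa using h1.deriv.symm

lemma unif_mul {α : Type*} {f g : ℕ → α → ℝ} {f0 g0 : α → ℝ}
    (hf : TendstoUniformly f f0 atTop) (hg : TendstoUniformly g g0 atTop)
    {Cf Cg : ℝ} (hCf0 : 0 ≤ Cf) (hCg0 : 0 ≤ Cg)
    (hCf : ∀ x, |f0 x| ≤ Cf) (hCg : ∀ x, |g0 x| ≤ Cg) :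
    TendstoUniformly (fun n x => f n x * g n x) (fun x => f0 x * g0 x) atTop := by
  rw [Metric.tendstoUniformly_iff] at hf hg ⊢
  intro ε hε
  set δ := min 1 (ε / (Cf + Cg + 2)) with hδdef
  have hδpos : 0 < δ := lt_min one_pos (by positivity)
  have hδ1 : δ ≤ 1 := min_le_left _ _
  have hδ2 : δ ≤ ε / (Cf + Cg + 2) := min_le_right _ _
  filter_upwards [hf δ hδpos, hg δ hδpos] with n hfn hgn x
  have h1 : |f0 x - f n x| < δ := by simpa [Real.dist_eq] using hfn x
  have h2 : |g0 x - g n x| < δ := by simpa [Real.dist_eq] using hgn x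
  have hfb : |f n x| ≤ Cf + 1 := by
    have h3 : |f n x| - |f0 x| ≤ |f n x - f0 x| := abs_sub_abs_le_abs_sub _ _
    rw [abs_sub_comm] at h3
    linarith [hCf x]
  have key : |f0 x * g0 x - f n x * g n x| ≤ δ * Cg + (Cf + 1) * δ := by
    have hid : f0 x * g0 x - f n x * g n x
        = (f0 x - f n x) * g0 x + f n x * (g0 x - g n x) := by ring
    rw [hid]
    calc |(f0 x - f n x) * g0 x + f n x * (g0 x - g n x)|
        ≤ |(f0 x - f n x) * g0 x| + |f n x * (g0 x - g n x)| := abs_add_le _ _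
      _ ≤ δ * Cg + (Cf + 1) * δ := by
          rw [abs_mul, abs_mul]
          exact add_le_add
            (mul_le_mul h1.le (hCg x) (abs_nonneg _) hδpos.le)
            (mul_le_mul hfb h2.le (abs_nonneg _) (by positivity))
  have hfin : δ * Cg + (Cf + 1) * δ < ε := by
    have hmul : δ * (Cf + Cg + 1) ≤ (ε / (Cf + Cg + 2)) * (Cf + Cg + 1) := by
      gcongr
    have hlt : (ε / (Cf + Cg + 2)) * (Cf + Cg + 1) < ε := by
      rw [div_mul_eq_mul_div, div_lt_iff₀ (by positivity)]
      nlinarith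
    nlinarith
  rw [Real.dist_eq]
  linarith

lemma unif_integral {h : ℕ → ℝ × ℝ → ℝ} {h0 : ℝ × ℝ → ℝ}
    (hconts : ∀ n, Continuous (h n)) (hcont0 : Continuous h0)
    (hh : TendstoUniformly h h0 atTop) (p : ℝ) :
    TendstoUniformly (fun n q => ∫ t in (0:ℝ)..p, h n (q, t))
      (fun q => ∫ t in (0:ℝ)..p, h0 (q, t)) atTop := by
  rw [Metric.tendstoUniformly_iff] at hh ⊢
  intro ε hε
  have hδpos : 0 < ε / (|p| + 1) := by positivity
  filter_upwards [hh _ hδpos] with n hn q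
  rw [Real.dist_eq]
  have hint0 : IntervalIntegrable (fun t => h0 (q, t)) MeasureTheory.volume 0 p :=
    (hcont0.comp (continuous_const.prodMk continuous_id)).intervalIntegrable 0 p
  have hintn : IntervalIntegrable (fun t => h n (q, t)) MeasureTheory.volume 0 p :=
    ((hconts n).comp (continuous_const.prodMk continuous_id)).intervalIntegrable 0 p
  have hsub : (∫ t in (0:ℝ)..p, h0 (q, t)) - ∫ t in (0:ℝ)..p, h n (q, t)
      = ∫ t in (0:ℝ)..p, (h0 (q, t) - h n (q, t)) :=
    (intervalIntegral.integral_sub hint0 hintn).symm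
  rw [hsub]
  have hbd : ‖∫ t in (0:ℝ)..p, (h0 (q, t) - h n (q, t))‖ ≤ (ε / (|p| + 1)) * |p - 0| := by
    apply intervalIntegral.norm_integral_le_of_norm_le_const
    intro t _
    have := hn (q, t)
    rw [Real.dist_eq] at this
    simpa [Real.norm_eq_abs] using this.le
  rw [Real.norm_eq_abs] at hbd
  have : (ε / (|p| + 1)) * |p - 0| < ε := by
    rw [sub_zero, div_mul_eq_mul_div, div_lt_iff₀ (by positivity)]
    nlinarith [abs_nonneg p]
  linarith

lemma PB_decomp (hu : ContDiff ℝ (⊤ : ℕ∞) u) (hv : ContDiff ℝ (⊤ : ℕ∞) v) (x : ℝ × ℝ) :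
    PB u v x = pp (fun y => pq u y * v y) x - pq (fun y => pp u y * v y) x
      + (pq (pp u) x - pp (pq u) x) * v x := by
  rw [pp_mul (contDiff_pq hu) hv x, pq_mul (contDiff_pp hu) hv x]
  unfold PB; ring

lemma cont_slice {w : ℝ × ℝ → ℝ} (hw : Continuous w) (q : ℝ) :
    Continuous (fun t => w (q, t)) := hw.comp (continuous_const.prodMk continuous_id)

lemma key_integral (hu : ContDiff ℝ (⊤ : ℕ∞) u) (hv : ContDiff ℝ (⊤ : ℕ∞) v) (q p : ℝ) :
    (∫ t in (0:ℝ)..p, pq (fun y => pp u y * v y) (q, t))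
      = (pq u (q, p) * v (q, p) - pq u (q, 0) * v (q, 0))
        + (∫ t in (0:ℝ)..p, (pq (pp u) (q, t) - pp (pq u) (q, t)) * v (q, t))
        - ∫ t in (0:ℝ)..p, PB u v (q, t) := by
  have hA : ContDiff ℝ (⊤ : ℕ∞) (fun y => pq u y * v y) := (contDiff_pq hu).mul hv
  have hB : ContDiff ℝ (⊤ : ℕ∞) (fun y => pp u y * v y) := (contDiff_pp hu).mul hv
  have hcontppA : Continuous (pp (fun y => pq u y * v y)) := (contDiff_pp hA).continuous
  have hcontpqB : Continuous (pq (fun y => pp u y * v y)) := (contDiff_pq hB).continuous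
  have hcontS : Continuous (fun y : ℝ × ℝ => (pq (pp u) y - pp (pq u) y) * v y) :=
    ((contDiff_pq (contDiff_pp hu)).continuous.sub
      (contDiff_pp (contDiff_pq hu)).continuous).mul hv.continuous
  have hintppA : IntervalIntegrable (fun t => pp (fun y => pq u y * v y) (q, t))
      MeasureTheory.volume 0 p := (cont_slice hcontppA q).intervalIntegrable 0 p
  have hintpqB : IntervalIntegrable (fun t => pq (fun y => pp u y * v y) (q, t))
      MeasureTheory.volume 0 p := (cont_slice hcontpqB q).intervalIntegrable 0 p
  have hintS : IntervalIntegrable (fun t => (pq (pp u) (q, t) - pp (pq u) (q, t)) * v (q, t))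
      MeasureTheory.volume 0 p := (cont_slice hcontS q).intervalIntegrable 0 p
  have hsplit : (∫ t in (0:ℝ)..p, PB u v (q, t))
      = (∫ t in (0:ℝ)..p, pp (fun y => pq u y * v y) (q, t))
        - (∫ t in (0:ℝ)..p, pq (fun y => pp u y * v y) (q, t))
        + ∫ t in (0:ℝ)..p, (pq (pp u) (q, t) - pp (pq u) (q, t)) * v (q, t) := by
    rw [← intervalIntegral.integral_sub hintppA hintpqB,
      ← intervalIntegral.integral_add (hintppA.sub hintpqB) hintS]
    apply intervalIntegral.integral_congr
    intro t _
    exact PB_decomp hu hv (q, t)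
  have hftc : (∫ t in (0:ℝ)..p, pp (fun y => pq u y * v y) (q, t))
      = pq u (q, p) * v (q, p) - pq u (q, 0) * v (q, 0) :=
    integral_pp hA hcontppA q p
  rw [hftc] at hsplit
  linarith

lemma continuous_PB (hu : ContDiff ℝ (⊤ : ℕ∞) u) (hv : ContDiff ℝ (⊤ : ℕ∞) v) :
    Continuous (PB u v) := by
  unfold PB
  exact ((contDiff_pq hu).continuous.mul (contDiff_pp hv).continuous).sub
    ((contDiff_pp hu).continuous.mul (contDiff_pq hv).continuous)

end helpers

theorem stmt4 (K : Set (ℝ × ℝ)) (hK : IsCompact K)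
    (F G : ℕ → ℝ × ℝ → ℝ) (Flim Glim : ℝ × ℝ → ℝ)
    (hFsm : ∀ n, ContDiff ℝ (⊤ : ℕ∞) (F n)) (hGsm : ∀ n, ContDiff ℝ (⊤ : ℕ∞) (G n))
    (hFlimsm : ContDiff ℝ (⊤ : ℕ∞) Flim) (hGlimsm : ContDiff ℝ (⊤ : ℕ∞) Glim)
    (hFsupp : ∀ n, tsupport (F n) ⊆ K) (hGsupp : ∀ n, tsupport (G n) ⊆ K)
    (hFlimsupp : tsupport Flim ⊆ K) (hGlimsupp : tsupport Glim ⊆ K)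
    -- C² convergence of Fₙ to F: the functions and all partial derivatives up to
    -- order two converge uniformly
    (hF0 : TendstoUniformly (fun n => F n) Flim atTop)
    (hFq : TendstoUniformly (fun n => pq (F n)) (pq Flim) atTop)
    (hFp : TendstoUniformly (fun n => pp (F n)) (pp Flim) atTop)
    (hFqq : TendstoUniformly (fun n => pq (pq (F n))) (pq (pq Flim)) atTop)
    (hFqp : TendstoUniformly (fun n => pq (pp (F n))) (pq (pp Flim)) atTop)
    (hFpq : TendstoUniformly (fun n => pp (pq (F n))) (pp (pq Flim)) atTop)
    (hFpp : TendstoUniformly (fun n => pp (pp (F n))) (pp (pp Flim)) atTop)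
    (hG0 : TendstoUniformly (fun n => G n) Glim atTop)
    -- uniform convergence of the Poisson brackets to a continuous function H
    (H : ℝ × ℝ → ℝ) (hHcont : Continuous H)
    (hH : TendstoUniformly (fun n => PB (F n) (G n)) H atTop) :
    ∀ x : ℝ × ℝ, PB Flim Glim x = H x := by
  -- bounds on limit functions
  obtain ⟨Cq, hCq0, hCq⟩ := exists_bound hK (contDiff_pq hFlimsm).continuous
    ((tsupport_pq_subset Flim).trans hFlimsupp)
  obtain ⟨Cp, hCp0, hCp⟩ := exists_bound hK (contDiff_pp hFlimsm).continuous
    ((tsupport_pp_subset Flim).trans hFlimsupp)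
  obtain ⟨Cg, hCg0, hCg⟩ := exists_bound hK hGlimsm.continuous hGlimsupp
  obtain ⟨Cqp, hCqp0, hCqp⟩ := exists_bound hK (contDiff_pq (contDiff_pp hFlimsm)).continuous
    (((tsupport_pq_subset _).trans (tsupport_pp_subset Flim)).trans hFlimsupp)
  obtain ⟨Cpq, hCpq0, hCpq⟩ := exists_bound hK (contDiff_pp (contDiff_pq hFlimsm)).continuous
    (((tsupport_pp_subset _).trans (tsupport_pq_subset Flim)).trans hFlimsupp)
  -- uniform convergences of products
  have hAu : TendstoUniformly (fun n x => pq (F n) x * G n x)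
      (fun x => pq Flim x * Glim x) atTop := unif_mul hFq hG0 hCq0 hCg0 hCq hCg
  have hBu : TendstoUniformly (fun n x => pp (F n) x * G n x)
      (fun x => pp Flim x * Glim x) atTop := unif_mul hFp hG0 hCp0 hCg0 hCp hCg
  have hSsub : TendstoUniformly (fun n x => pq (pp (F n)) x - pp (pq (F n)) x)
      (fun x => pq (pp Flim) x - pp (pq Flim) x) atTop := hFqp.sub hFpq
  have hSu : TendstoUniformly (fun n x => (pq (pp (F n)) x - pp (pq (F n)) x) * G n x)
      (fun x => (pq (pp Flim) x - pp (pq Flim) x) * Glim x) atTop := by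
    refine unif_mul (Cf := Cqp + Cpq) hSsub hG0 (by positivity) hCg0 (fun x => ?_) hCg
    exact (abs_sub _ _).trans (add_le_add (hCqp x) (hCpq x))
  -- continuity facts
  have hBcont : ∀ n, Continuous (fun y : ℝ × ℝ => pp (F n) y * G n y) := fun n =>
    (contDiff_pp (hFsm n)).continuous.mul (hGsm n).continuous
  have hBlimcont : Continuous (fun y : ℝ × ℝ => pp Flim y * Glim y) :=
    (contDiff_pp hFlimsm).continuous.mul hGlimsm.continuous
  have hScont : ∀ n, Continuous (fun y : ℝ × ℝ => (pq (pp (F n)) y - pp (pq (F n)) y) * G n y) :=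
    fun n => ((contDiff_pq (contDiff_pp (hFsm n))).continuous.sub
      (contDiff_pp (contDiff_pq (hFsm n))).continuous).mul (hGsm n).continuous
  have hSlimcont : Continuous (fun y : ℝ × ℝ => (pq (pp Flim) y - pp (pq Flim) y) * Glim y) :=
    ((contDiff_pq (contDiff_pp hFlimsm)).continuous.sub
      (contDiff_pp (contDiff_pq hFlimsm)).continuous).mul hGlimsm.continuous
  have hPBcont : ∀ n, Continuous (PB (F n) (G n)) := fun n => continuous_PB (hFsm n) (hGsm n)
  -- derivative of parametric integral, for a smooth pair with support in K
  have hparam : ∀ (u v : ℝ × ℝ → ℝ), ContDiff ℝ (⊤ : ℕ∞) u → ContDiff ℝ (⊤ : ℕ∞) v → tsupport v ⊆ K →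
      ∀ (p s : ℝ), HasDerivAt (fun r => ∫ t in (0:ℝ)..p, pp u (r, t) * v (r, t))
        (∫ t in (0:ℝ)..p, pq (fun y => pp u y * v y) (s, t)) s := by
    intro u v hu hv hvK p s
    have hBsm : ContDiff ℝ (⊤ : ℕ∞) (fun y => pp u y * v y) := (contDiff_pp hu).mul hv
    have hBsupp : tsupport (fun y => pp u y * v y) ⊆ K :=
      (closure_minimal ((Function.support_mul_subset_right _ _).trans
        ((subset_closure).trans hvK)) hK.isClosed)
    obtain ⟨C, _, hC⟩ := exists_bound hK (contDiff_pq hBsm).continuous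
      ((tsupport_pq_subset _).trans hBsupp)
    exact hasDerivAt_integral_param hBsm.continuous (contDiff_pq hBsm).continuous
      (fun x => hasDerivAt_sliceq hBsm x) hC p s
  -- main integral identity
  have main : ∀ q p : ℝ, (∫ t in (0:ℝ)..p, PB Flim Glim (q, t)) = ∫ t in (0:ℝ)..p, H (q, t) := by
    intro q p
    -- derivative of the approximating integrals, rewritten via key_integral
    have hDn : ∀ n : ℕ, ∀ s : ℝ,
        HasDerivAt (fun r => ∫ t in (0:ℝ)..p, pp (F n) (r, t) * G n (r, t))
          ((pq (F n) (s, p) * G n (s, p) - pq (F n) (s, 0) * G n (s, 0))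
            + (∫ t in (0:ℝ)..p, (pq (pp (F n)) (s, t) - pp (pq (F n)) (s, t)) * G n (s, t))
            - ∫ t in (0:ℝ)..p, PB (F n) (G n) (s, t)) s := by
      intro n s
      have := hparam (F n) (G n) (hFsm n) (hGsm n) (hGsupp n) p s
      rwa [key_integral (hFsm n) (hGsm n) s p] at this
    -- uniform convergence of the derivatives
    have hterm1 : TendstoUniformly (fun n s => pq (F n) (s, p) * G n (s, p))
        (fun s => pq Flim (s, p) * Glim (s, p)) atTop := hAu.comp (fun s => (s, p))
    have hterm2 : TendstoUniformly (fun n s => pq (F n) (s, 0) * G n (s, 0))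
        (fun s => pq Flim (s, 0) * Glim (s, 0)) atTop := hAu.comp (fun s => (s, 0))
    have hterm3 : TendstoUniformly
        (fun n s => ∫ t in (0:ℝ)..p, (pq (pp (F n)) (s, t) - pp (pq (F n)) (s, t)) * G n (s, t))
        (fun s => ∫ t in (0:ℝ)..p, (pq (pp Flim) (s, t) - pp (pq Flim) (s, t)) * Glim (s, t))
        atTop := unif_integral hScont hSlimcont hSu p
    have hterm4 : TendstoUniformly (fun n s => ∫ t in (0:ℝ)..p, PB (F n) (G n) (s, t))
        (fun s => ∫ t in (0:ℝ)..p, H (s, t)) atTop := unif_integral hPBcont hHcont hH p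
    have hCu : TendstoUniformly
        (fun n s => (pq (F n) (s, p) * G n (s, p) - pq (F n) (s, 0) * G n (s, 0))
            + (∫ t in (0:ℝ)..p, (pq (pp (F n)) (s, t) - pp (pq (F n)) (s, t)) * G n (s, t))
            - ∫ t in (0:ℝ)..p, PB (F n) (G n) (s, t))
        (fun s => (pq Flim (s, p) * Glim (s, p) - pq Flim (s, 0) * Glim (s, 0))
            + (∫ t in (0:ℝ)..p, (pq (pp Flim) (s, t) - pp (pq Flim) (s, t)) * Glim (s, t))
            - ∫ t in (0:ℝ)..p, H (s, t)) atTop :=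
      ((hterm1.sub hterm2).add hterm3).sub hterm4
    -- pointwise convergence of the integrals themselves
    have hDpt : ∀ s : ℝ, Tendsto (fun n => ∫ t in (0:ℝ)..p, pp (F n) (s, t) * G n (s, t)) atTop
        (nhds (∫ t in (0:ℝ)..p, pp Flim (s, t) * Glim (s, t))) := fun s =>
      (unif_integral hBcont hBlimcont hBu p).tendsto_at s
    -- limit derivative via uniform limits
    have hlim : HasDerivAt (fun r => ∫ t in (0:ℝ)..p, pp Flim (r, t) * Glim (r, t))
        ((pq Flim (q, p) * Glim (q, p) - pq Flim (q, 0) * Glim (q, 0))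
          + (∫ t in (0:ℝ)..p, (pq (pp Flim) (q, t) - pp (pq Flim) (q, t)) * Glim (q, t))
          - ∫ t in (0:ℝ)..p, H (q, t)) q :=
      hasDerivAt_of_tendstoUniformly hCu (Filter.Eventually.of_forall hDn) hDpt q
    have hD2 : HasDerivAt (fun r => ∫ t in (0:ℝ)..p, pp Flim (r, t) * Glim (r, t))
        (∫ t in (0:ℝ)..p, pq (fun y => pp Flim y * Glim y) (q, t)) q :=
      hparam Flim Glim hFlimsm hGlimsm hGlimsupp p q
    have hEq := hD2.unique hlim
    rw [key_integral hFlimsm hGlimsm q p] at hEq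
    linarith
  -- conclude pointwise equality
  intro x
  have hwcont : Continuous (fun t => H (x.1, t) - PB Flim Glim (x.1, t)) :=
    (cont_slice hHcont x.1).sub (cont_slice (continuous_PB hFlimsm hGlimsm) x.1)
  have hz : ∀ p : ℝ, (∫ t in (0:ℝ)..p, (H (x.1, t) - PB Flim Glim (x.1, t))) = 0 := by
    intro p
    rw [intervalIntegral.integral_sub ((cont_slice hHcont x.1).intervalIntegrable 0 p)
      ((cont_slice (continuous_PB hFlimsm hGlimsm) x.1).intervalIntegrable 0 p)]
    rw [main x.1 p]
    ring
  have := zero_of_integral _ hwcont hz x.2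
  have h2 : H (x.1, x.2) = PB Flim Glim (x.1, x.2) := by linarith
  simpa using h2.symm
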